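/- arXiv:2011.00718 — 2 statements merged into one kernel-verified Lean document; each statement's English description precedes it below -/
import Mathlib

section
/- Let λ₁, …, λ_m ≥ 0, σ² > 0, and D ≥ 0. Consider minimizing F(N₁,…,N_m) = Σᵢ (1/2)·log₂(1 + λᵢ/(Nᵢ + σ²)) over N₁,…,N_m ≥ 0 subject to Σᵢ Nᵢ ≤ D. Then the allocation Nᵢ = max(η/(2(1 + √(1 + η/λᵢ))) − σ², 0) (with the convention Nᵢ = 0 when λᵢ = 0), where η ≥ 0 is chosen so that Σᵢ Nᵢ = D, is a global minimizer of F on the feasible set. -/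
/-!
Each summand `log (1 + λ / (x + s))` is convex and decreasing in `x`, so the allocation is optimal as
soon as it satisfies the KKT conditions with a common multiplier `4 / η`: the marginal decrease
`λ / (A (A + λ))`, where `A = N + s`, is at most `4 / η`, with equality where `N > 0`. The threshold
`t = η / (2 (1 + √(1 + η / λ)))` is the positive root of `4 t (t + λ) = λ η`, which is exactly the
equality case, and `N = max (t - s) 0` falls back to `N = 0` when `t ≤ s`, where the inequality holds.
Rather than differentiating, the per-coordinate tangent bound is obtained from `log x ≤ x - 1`.
-/

open Real Finset

noncomputable def thresholdedAllocation (s eta lam : ℝ) : ℝ :=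
  if lam = 0 then 0 else max (eta / (2 * (1 + √(1 + eta / lam))) - s) 0

section KKT

variable {lam eta s A B a b : ℝ}

lemma log_one_add_div_sub_log_one_add_div_le (hl : 0 ≤ lam) (hA : 0 < A) (hB : 0 < B) :
    log (1 + lam / A) - log (1 + lam / B) ≤ lam * (B - A) / (A * (B + lam)) := by
  have hratio : 0 < (1 + lam / A) / (1 + lam / B) := by positivity
  calc log (1 + lam / A) - log (1 + lam / B)
      = log ((1 + lam / A) / (1 + lam / B)) := (log_div (by positivity) (by positivity)).symm
    _ ≤ (1 + lam / A) / (1 + lam / B) - 1 := log_le_sub_one_of_pos hratio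
    _ = lam * (B - A) / (A * (B + lam)) := by field_simp; ring

lemma lam_mul_sub_div_le_of_kkt (hl : 0 ≤ lam) (heta : 0 < eta) (hA : 0 < A) (hB : 0 < B)
    (hle : lam * eta ≤ 4 * (A * (A + lam)))
    (heq : B < A → 4 * (A * (A + lam)) = lam * eta) :
    lam * (B - A) / (A * (B + lam)) ≤ 4 / eta * (B - A) := by
  have key : (B - A) * (lam * eta) ≤ (B - A) * (4 * (A * (B + lam))) := by
    rcases le_or_gt A B with hAB | hBA
    · exact mul_le_mul_of_nonneg_left (hle.trans (by gcongr)) (sub_nonneg.2 hAB)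
    · exact mul_le_mul_of_nonpos_left ((heq hBA).symm ▸ by gcongr) (sub_nonpos.2 hBA.le)
  rw [div_le_iff₀ (by positivity), show 4 / eta * (B - A) * (A * (B + lam))
    = (B - A) * (4 * (A * (B + lam))) / eta by ring, le_div_iff₀ heta]
  linarith

lemma log_one_add_div_le_of_kkt (hl : 0 ≤ lam) (hs : 0 < s) (heta : 0 < eta)
    (ha : 0 ≤ a) (hb : 0 ≤ b)
    (hle : lam * eta ≤ 4 * ((a + s) * (a + s + lam)))
    (heq : 0 < a → 4 * ((a + s) * (a + s + lam)) = lam * eta) :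
    log (1 + lam / (a + s)) ≤ log (1 + lam / (b + s)) + 4 / eta * (b - a) := by
  have hcore := lam_mul_sub_div_le_of_kkt hl heta (A := a + s) (B := b + s) (by positivity)
    (by positivity) hle fun h => heq (by linarith)
  have := log_one_add_div_sub_log_one_add_div_le hl (A := a + s) (B := b + s) (by positivity)
    (by positivity)
  rw [add_sub_add_right_eq_sub] at hcore this
  linarith

end KKT

lemma sum_log_one_add_div_le_of_kkt {ι : Type*} [Fintype ι] {lam a b : ι → ℝ} {s eta : ℝ}
    (hl : ∀ i, 0 ≤ lam i) (hs : 0 < s) (heta : 0 < eta) (ha : ∀ i, 0 ≤ a i) (hb : ∀ i, 0 ≤ b i)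
    (hle : ∀ i, lam i * eta ≤ 4 * ((a i + s) * (a i + s + lam i)))
    (heq : ∀ i, 0 < a i → 4 * ((a i + s) * (a i + s + lam i)) = lam i * eta)
    (hsum : ∑ i, b i ≤ ∑ i, a i) :
    ∑ i, log (1 + lam i / (a i + s)) ≤ ∑ i, log (1 + lam i / (b i + s)) := by
  have hbudget : ∑ i, 4 / eta * (b i - a i) ≤ 0 := by
    rw [← mul_sum, sum_sub_distrib]
    exact mul_nonpos_of_nonneg_of_nonpos (by positivity) (by linarith)
  calc ∑ i, log (1 + lam i / (a i + s))
      ≤ ∑ i, (log (1 + lam i / (b i + s)) + 4 / eta * (b i - a i)) :=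
        sum_le_sum fun i _ =>
          log_one_add_div_le_of_kkt (hl i) hs heta (ha i) (hb i) (hle i) (heq i)
    _ ≤ ∑ i, log (1 + lam i / (b i + s)) := by rw [sum_add_distrib]; linarith

section Allocation

variable {lam eta s : ℝ}

lemma four_mul_threshold_mul_add_eq (hl : 0 < lam) (heta : 0 ≤ eta) :
    4 * (eta / (2 * (1 + √(1 + eta / lam))) * (eta / (2 * (1 + √(1 + eta / lam))) + lam))
      = lam * eta := by
  set r := √(1 + eta / lam)
  have hr : lam * r ^ 2 = lam + eta := by
    rw [sq_sqrt (by positivity)]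
    field_simp
  have hr1 : 0 < 1 + r := by positivity
  field_simp
  linear_combination (-4 * eta) * hr

lemma thresholdedAllocation_nonneg : 0 ≤ thresholdedAllocation s eta lam := by
  unfold thresholdedAllocation
  split_ifs
  exacts [le_rfl, le_max_right _ _]

lemma thresholdedAllocation_zero_eta (hs : 0 < s) : thresholdedAllocation s 0 lam = 0 := by
  simp [thresholdedAllocation, hs.le]

lemma thresholdedAllocation_add_of_pos (hl : 0 < lam) :
    thresholdedAllocation s eta lam + s = max (eta / (2 * (1 + √(1 + eta / lam)))) s := by
  rw [thresholdedAllocation, if_neg hl.ne', ← max_add_add_right, sub_add_cancel, zero_add]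

lemma lam_mul_le_thresholdedAllocation (hl : 0 ≤ lam) (hs : 0 < s) (heta : 0 ≤ eta) :
    lam * eta ≤ 4 * ((thresholdedAllocation s eta lam + s) *
      (thresholdedAllocation s eta lam + s + lam)) := by
  rcases hl.eq_or_lt with rfl | hl
  · simp only [thresholdedAllocation, if_true, zero_mul, zero_add, add_zero]
    positivity
  · rw [thresholdedAllocation_add_of_pos hl, ← four_mul_threshold_mul_add_eq hl heta]
    have : 0 ≤ eta / (2 * (1 + √(1 + eta / lam))) := by positivity
    gcongr <;> exact le_max_left _ _

lemma thresholdedAllocation_eq_of_pos (hl : 0 ≤ lam) (heta : 0 ≤ eta)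
    (hpos : 0 < thresholdedAllocation s eta lam) :
    4 * ((thresholdedAllocation s eta lam + s) * (thresholdedAllocation s eta lam + s + lam))
      = lam * eta := by
  rcases hl.eq_or_lt with rfl | hl
  · simp [thresholdedAllocation] at hpos
  · rw [thresholdedAllocation_add_of_pos hl, ← four_mul_threshold_mul_add_eq hl heta]
    rw [thresholdedAllocation, if_neg hl.ne', lt_max_iff] at hpos
    rw [max_eq_left (by simpa using hpos : s < _).le]

end Allocation

open Finset in
theorem thresholded_allocation_optimal_general (m : ℕ) (lam : Fin m → ℝ) (hlam : ∀ i, 0 ≤ lam i)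
    (s D eta : ℝ) (hs : 0 < s) (heta : 0 ≤ eta)
    (N : Fin m → ℝ)
    (hN : ∀ i, N i = if lam i = 0 then 0
      else max (eta / (2 * (1 + Real.sqrt (1 + eta / lam i))) - s) 0)
    (hsum : ∑ i, N i = D) :
    ∀ M : Fin m → ℝ, (∀ i, 0 ≤ M i) → ∑ i, M i ≤ D →
      ∑ i, (1 / 2) * Real.logb 2 (1 + lam i / (N i + s)) ≤
        ∑ i, (1 / 2) * Real.logb 2 (1 + lam i / (M i + s)) := by
  intro M hM hMsum
  have hN : ∀ i, N i = thresholdedAllocation s eta (lam i) := hN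
  rcases heta.eq_or_lt with rfl | hetapos
  · have hN0 : ∀ i, N i = 0 := fun i => (hN i).trans (thresholdedAllocation_zero_eta hs)
    have hMsum0 : ∑ i, M i = 0 :=
      le_antisymm (by simpa [← hsum, hN0] using hMsum) (sum_nonneg fun i _ => hM i)
    have hM0 : ∀ i, M i = 0 := fun i =>
      (sum_eq_zero_iff_of_nonneg fun j _ => hM j).1 hMsum0 i (mem_univ i)
    simp [hN0, hM0]
  · have := sum_log_one_add_div_le_of_kkt hlam hs hetapos (a := N) (b := M)
      (fun i => hN i ▸ thresholdedAllocation_nonneg) hM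
      (fun i => hN i ▸ lam_mul_le_thresholdedAllocation (hlam i) hs heta)
      (fun i => hN i ▸ thresholdedAllocation_eq_of_pos (hlam i) heta) (hsum ▸ hMsum)
    simp only [logb, ← mul_sum, ← sum_div]
    gcongr

open Finset in
theorem thresholded_allocation_optimal (m : ℕ) (lam : Fin m → ℝ) (hlam : ∀ i, 0 ≤ lam i)
    (s D eta : ℝ) (hs : 0 < s) (hD : 0 ≤ D) (heta : 0 ≤ eta)
    (N : Fin m → ℝ)
    (hN : ∀ i, N i = if lam i = 0 then 0
      else max (eta / (2 * (1 + Real.sqrt (1 + eta / lam i))) - s) 0)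
    (hsum : ∑ i, N i = D) :
    ∀ M : Fin m → ℝ, (∀ i, 0 ≤ M i) → ∑ i, M i ≤ D →
      ∑ i, (1 / 2) * Real.logb 2 (1 + lam i / (N i + s)) ≤
        ∑ i, (1 / 2) * Real.logb 2 (1 + lam i / (M i + s)) :=
  thresholded_allocation_optimal_general m lam hlam s D eta hs heta N hN hsum
end

section
/- Let A be an m×m symmetric positive-definite real matrix with diagonal entries a₁₁, …, a_mm and let Λ = diag(λ₁, …, λ_m) with all λᵢ ≥ 0. Then det(A + Λ)/det(A) ≥ Πᵢ (aᵢᵢ + λᵢ)/aᵢᵢ, with equality if A is diagonal. -/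
/-!
Adding `c ≥ 0` to the diagonal entry `j` of a positive definite `M` turns `det M` into
`det M + c · adj(M)ⱼⱼ = det M · (1 + c (M⁻¹)ⱼⱼ)`, and `(M⁻¹)ⱼⱼ ≥ 1 / Mⱼⱼ`. Adding the entries of `Λ`
one at a time keeps the matrix positive definite and leaves the diagonal entries still to be
perturbed unchanged, so the factors `(aᵢᵢ + λᵢ) / aᵢᵢ` multiply up.
-/

open Finset

namespace Matrix

variable {n : Type*} [Fintype n] [DecidableEq n]

theorem det_add_single_self {R : Type*} [CommRing R] (M : Matrix n n R) (j : n) (c : R) :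
    (M + single j j c).det = M.det + c * M.adjugate j j := by
  have hrow : M + single j j c = M.updateRow j (M j + c • Pi.single j 1) := by
    ext i k
    rcases eq_or_ne i j with rfl | hij
    · simp [single_apply, Pi.single_apply, eq_comm]
    · simp [hij, hij.symm]
  rw [hrow, det_updateRow_add, det_updateRow_smul, updateRow_eq_self, adjugate_apply]

theorem IsDiag.det_add_diagonal {R : Type*} [CommRing R] {A : Matrix n n R} (hA : A.IsDiag)
    (d : n → R) : (A + diagonal d).det = ∏ i, (A i i + d i) := by
  conv_lhs => rw [← hA.diagonal_diag]
  rw [diagonal_add, det_diagonal]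
  rfl

namespace PosDef

variable {M : Matrix n n ℝ}

/-- With `x = M⁻¹ eⱼ` and `b = xⱼ = M⁻¹ j j`, positivity of the quadratic form at `b eⱼ - x`
reads `b² Mⱼⱼ - b ≥ 0`. -/
theorem one_le_diag_mul_inv_diag (hM : M.PosDef) (j : n) : 1 ≤ M j j * M⁻¹ j j := by
  set e : n → ℝ := Pi.single j 1
  set x := M⁻¹ *ᵥ e
  set b := M⁻¹ j j
  have hMx : M *ᵥ x = e := by
    rw [mulVec_mulVec, mul_nonsing_inv M hM.det_pos.ne'.isUnit, one_mulVec]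
  have hxe : x ⬝ᵥ e = b := by simp [x, e, b, mulVec_single]
  have hxMe : x ⬝ᵥ M *ᵥ e = 1 := by
    have hMt : Mᵀ = M := by simpa using hM.isHermitian.eq
    rw [dotProduct_mulVec, ← mulVec_transpose, hMt, hMx]
    simp [e]
  have hee : e ⬝ᵥ e = 1 := by simp [e]
  have heMe : e ⬝ᵥ M *ᵥ e = M j j := by simp [e, mulVec_single]
  have hquad : 0 ≤ (b • e - x) ⬝ᵥ M *ᵥ (b • e - x) := hM.posSemidef.dotProduct_mulVec_nonneg _
  have hexpand : (b • e - x) ⬝ᵥ M *ᵥ (b • e - x) = b * b * M j j - b := by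
    simp only [mulVec_sub, mulVec_smul, hMx, sub_dotProduct, dotProduct_sub, smul_dotProduct,
      dotProduct_smul, heMe, hxe, hxMe, hee, smul_eq_mul]
    ring
  nlinarith [hM.inv.diag_pos (i := j)]

theorem det_mul_le_det_add_single (hM : M.PosDef) (j : n) {c : ℝ} (hc : 0 ≤ c) :
    M.det * ((M j j + c) / M j j) ≤ (M + single j j c).det := by
  have hdet := hM.det_pos
  have hMjj : 0 < M j j := hM.diag_pos
  have hadj : M.adjugate j j = M.det * M⁻¹ j j := by
    rw [inv_def, smul_apply, Ring.inverse_eq_inv', smul_eq_mul]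
    field_simp
  have hinv : (M j j)⁻¹ ≤ M⁻¹ j j := by
    rw [inv_le_iff_one_le_mul₀' hMjj]
    exact hM.one_le_diag_mul_inv_diag j
  rw [det_add_single_self, hadj, add_div, div_self hMjj.ne', div_eq_mul_inv]
  nlinarith [mul_le_mul_of_nonneg_left hinv (mul_nonneg hdet.le hc)]

theorem det_mul_prod_le_det_add_diagonal {A : Matrix n n ℝ} (hA : A.PosDef) {d : n → ℝ}
    (hd : ∀ i, 0 ≤ d i) : A.det * ∏ i, (A i i + d i) / A i i ≤ (A + diagonal d).det := by
  rw [← sum_single_eq_diagonal]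
  suffices ∀ s : Finset n,
      A.det * ∏ i ∈ s, (A i i + d i) / A i i ≤ (A + ∑ i ∈ s, single i i (d i)).det from this _
  intro s
  induction s using Finset.induction_on with
  | empty => simp
  | insert j s hj ih =>
    set M := A + ∑ i ∈ s, single i i (d i)
    have hM : M.PosDef := hA.add_posSemidef <| posSemidef_sum s fun i _ => by
      rw [← diagonal_single]
      exact posSemidef_diagonal_iff.mpr fun k => by
        rcases eq_or_ne k i with rfl | _ <;> simp [*]
    have hMjj : M j j = A j j := by simp [M, sum_apply, single_apply, hj]
    rw [prod_insert hj, sum_insert hj, add_comm (single j j (d j)), ← add_assoc]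
    calc A.det * ((A j j + d j) / A j j * ∏ i ∈ s, (A i i + d i) / A i i)
        = (A.det * ∏ i ∈ s, (A i i + d i) / A i i) * ((M j j + d j) / M j j) := by
          rw [hMjj]; ring
      _ ≤ M.det * ((M j j + d j) / M j j) := by
          gcongr
          exact div_nonneg (add_nonneg hM.diag_pos.le (hd j)) hM.diag_pos.le
      _ ≤ (M + single j j (d j)).det := hM.det_mul_le_det_add_single j (hd j)

end PosDef

end Matrix

open Finset in
theorem det_diagonal_perturbation_inequality (m : ℕ) (A : Matrix (Fin m) (Fin m) ℝ)
    (hA : A.PosDef) (lam : Fin m → ℝ) (hlam : ∀ i, 0 ≤ lam i) :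
    (∏ i, (A i i + lam i) / A i i) ≤ (A + Matrix.diagonal lam).det / A.det ∧
      (A.IsDiag → (A + Matrix.diagonal lam).det / A.det = ∏ i, (A i i + lam i) / A i i) := by
  refine ⟨?_, fun hdiag => ?_⟩
  · rw [le_div_iff₀ hA.det_pos, mul_comm]
    exact hA.det_mul_prod_le_det_add_diagonal hlam
  · have hdetA : A.det = ∏ i, A i i := by simpa using hdiag.det_add_diagonal 0
    rw [hdiag.det_add_diagonal, hdetA, prod_div_distrib]
end
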